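/- Let e ∈ (0, (3-√3)/6). Then there exist real numbers A > 0 and B with A³ > B³, 0 < e - A + B and e + A + B < 1, such that F(A,B) > H''(e), where F(A,B) = [H(e+A+B) + H(e-A+B) - 2H(e) - 2B·H'(e)]/(A³-B³)^{2/3}. -/

import Mathlib

/-!
Put `H = binEntropy` and `B = β A²`. By Taylor's theorem the numerator is at least
`H''(e) A² + (H''(e) β² + H'''(e) β + m/12) A⁴ + O(A⁵)` for any `m < H''''(e)`, while `H''(e) < 0`
and `(A³ - B³)^(2/3) ≥ A² - β³ A⁵` give `H''(e) (A³ - B³)^(2/3) ≤ H''(e) A² + O(A⁵)`. At the vertex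
`β = -H'''(e) / (2 H''(e))` the coefficient of `A⁴` is positive for `m` close to `H''''(e)` iff
`3 H'''(e)² > H''(e) H''''(e)`. With `w = u (1 - u)` one has `H'' = -1/w`, `H''' = (1 - 2u)/w²`
and `H'''' = (6w - 2)/w³`, so this condition reads `6 e (1 - e) < 1`, i.e. `e < (3 - √3)/6`.
-/

/-- The binary entropy function. -/
noncomputable def binEntropy (u : ℝ) : ℝ := -(u * Real.log u + (1 - u) * Real.log (1 - u))

open Set Filter Topology
open scoped Nat

theorem taylor_add_le_of_le_iteratedDeriv {f : ℝ → ℝ} {s : Set ℝ} {x₀ x m : ℝ} {n : ℕ}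
    (hs : IsOpen s) (hs' : s.OrdConnected) (hx₀ : x₀ ∈ s) (hx : x ∈ s)
    (hf : ContDiffOn ℝ (n + 1) f s) (hn : Even (n + 1))
    (hm : ∀ y ∈ s, m ≤ iteratedDeriv (n + 1) f y) :
    ∑ k ∈ Finset.range (n + 1), iteratedDeriv k f x₀ * (x - x₀) ^ k / k ! +
      m * (x - x₀) ^ (n + 1) / (n + 1)! ≤ f x := by
  rcases eq_or_ne x₀ x with rfl | hne
  · simp [Finset.sum_range_succ']
  have hsub : uIcc x₀ x ⊆ s := hs'.uIcc_subset hx₀ hx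
  obtain ⟨y, hy, hrem⟩ := taylor_mean_remainder_lagrange_iteratedDeriv hne (hf.mono hsub)
  have htaylor : taylorWithinEval f n (uIcc x₀ x) x₀ x =
      ∑ k ∈ Finset.range (n + 1), iteratedDeriv k f x₀ * (x - x₀) ^ k / k ! := by
    rw [taylor_within_apply]
    refine Finset.sum_congr rfl fun k hk ↦ ?_
    rw [iteratedDerivWithin_eq_iteratedDeriv (uniqueDiffOn_uIcc hne)
      ((hf.contDiffAt (hs.mem_nhds hx₀)).of_le ?_) left_mem_uIcc, smul_eq_mul]
    · ring
    · exact_mod_cast (Finset.mem_range.1 hk).le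
  have hpow : 0 ≤ (x - x₀) ^ (n + 1) / (n + 1)! := div_nonneg (hn.pow_nonneg _) (by positivity)
  have hremy := mul_le_mul_of_nonneg_right (hm y (hsub (Ioo_subset_Icc_self hy))) hpow
  rw [htaylor, mul_div_assoc] at hrem
  rw [mul_div_assoc]
  linarith

theorem eventually_taylor_add_le {f : ℝ → ℝ} {x₀ m : ℝ} {n : ℕ}
    (hf : ContDiffAt ℝ (n + 1) f x₀) (hn : Even (n + 1)) (hm : m < iteratedDeriv (n + 1) f x₀) :
    ∀ᶠ x in 𝓝 x₀, ∑ k ∈ Finset.range (n + 1), iteratedDeriv k f x₀ * (x - x₀) ^ k / k ! +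
      m * (x - x₀) ^ (n + 1) / (n + 1)! ≤ f x := by
  obtain ⟨u, hu, hfu⟩ := hf.contDiffOn le_rfl (by simp)
  have hfu' : ContDiffOn ℝ (n + 1) f (interior u) := hfu.mono interior_subset
  have hcont : ContinuousOn (iteratedDeriv (n + 1) f) (interior u) :=
    (hfu'.continuousOn_iteratedDerivWithin (by simp) isOpen_interior.uniqueDiffOn).congr
      (iteratedDerivWithin_of_isOpen isOpen_interior).symm
  have hx₀u : interior u ∈ 𝓝 x₀ := interior_mem_nhds.2 hu
  have hgood : ∀ᶠ y in 𝓝 x₀, y ∈ interior u ∧ m < iteratedDeriv (n + 1) f y :=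
    eventually_and.2 ⟨hx₀u, (hcont.continuousAt hx₀u).eventually (eventually_gt_nhds hm)⟩
  obtain ⟨l, r, hx₀, hlr⟩ := mem_nhds_iff_exists_Ioo_subset.1 hgood
  filter_upwards [Ioo_mem_nhds hx₀.1 hx₀.2] with x hx
  exact taylor_add_le_of_le_iteratedDeriv isOpen_Ioo ordConnected_Ioo hx₀ hx
    (hfu'.mono fun y hy ↦ (hlr hy).1) hn fun y hy ↦ (hlr hy).2.le

theorem exists_eventually_quartic_taylor_le {f : ℝ → ℝ} {e : ℝ} (hf : ContDiffAt ℝ 4 f e)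
    (h2 : iteratedDeriv 2 f e < 0)
    (h4 : iteratedDeriv 2 f e * iteratedDeriv 4 f e < 3 * iteratedDeriv 3 f e ^ 2) :
    ∃ m, iteratedDeriv 2 f e * m < 3 * iteratedDeriv 3 f e ^ 2 ∧ ∀ᶠ x in 𝓝 e,
      f e + deriv f e * (x - e) + iteratedDeriv 2 f e * (x - e) ^ 2 / 2 +
        iteratedDeriv 3 f e * (x - e) ^ 3 / 6 + m * (x - e) ^ 4 / 24 ≤ f x := by
  obtain ⟨m, hm3, hm4⟩ : ∃ m, 3 * iteratedDeriv 3 f e ^ 2 / iteratedDeriv 2 f e < m ∧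
      m < iteratedDeriv 4 f e :=
    exists_between ((div_lt_iff_of_neg h2).2 (by linarith))
  refine ⟨m, by linarith [(div_lt_iff_of_neg h2).1 hm3], ?_⟩
  simpa [Finset.sum_range_succ, Nat.factorial] using
    eventually_taylor_add_le (n := 3) hf (by decide) hm4

theorem quadratic_pos_at_vertex {a b c : ℝ} (ha : a < 0) (hdisc : 4 * a * c < b ^ 2) :
    0 < a * (b / (-2 * a)) ^ 2 + b * (b / (-2 * a)) + c := by
  have hval : a * (b / (-2 * a)) ^ 2 + b * (b / (-2 * a)) + c = (b ^ 2 - 4 * a * c) / (-4 * a) := by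
    field_simp [ha.ne]
    ring
  rw [hval]
  exact div_pos (by linarith) (by linarith)

theorem div_le_rpow_two_div_three {y a : ℝ} (hy : 0 ≤ y) (ha : 0 < a) (hya : y ≤ a ^ 3) :
    y / a ≤ y ^ ((2 : ℝ) / 3) := by
  have hcube : (y ^ ((2 : ℝ) / 3)) ^ 3 = y ^ 2 := by
    rw [← Real.rpow_natCast, ← Real.rpow_mul hy]; norm_num
  refine le_of_pow_le_pow_left₀ three_ne_zero (by positivity) ?_
  rw [hcube, div_pow, div_le_iff₀ (by positivity)]
  calc y ^ 3 = y ^ 2 * y := by ring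
    _ ≤ y ^ 2 * a ^ 3 := mul_le_mul_of_nonneg_left hya (by positivity)

theorem sq_sub_le_rpow_cube_sub_cube {A β : ℝ} (hA : 0 < A) (hβ : 0 ≤ β) (hβA : β * A ≤ 1) :
    A ^ 2 - β ^ 3 * A ^ 5 ≤ (A ^ 3 - (β * A ^ 2) ^ 3) ^ ((2 : ℝ) / 3) := by
  have hcube : (β * A ^ 2) ^ 3 ≤ A ^ 3 :=
    pow_le_pow_left₀ (by positivity) (by nlinarith) 3
  have := div_le_rpow_two_div_three (sub_nonneg.2 hcube) hA (sub_le_self _ (by positivity))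
  rwa [show (A ^ 3 - (β * A ^ 2) ^ 3) / A = A ^ 2 - β ^ 3 * A ^ 5 by field_simp] at this

theorem exists_second_difference_ratio_gt {f : ℝ → ℝ} {e : ℝ} {s : Set ℝ}
    (hf : ContDiffAt ℝ 4 f e) (hs : s ∈ 𝓝 e)
    (h2 : iteratedDeriv 2 f e < 0) (h3 : 0 ≤ iteratedDeriv 3 f e)
    (h4 : iteratedDeriv 2 f e * iteratedDeriv 4 f e < 3 * iteratedDeriv 3 f e ^ 2) :
    ∃ A B : ℝ, 0 < A ∧ B ^ 3 < A ^ 3 ∧ e - A + B ∈ s ∧ e + A + B ∈ s ∧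
      (f (e + A + B) + f (e - A + B) - 2 * f e - 2 * B * deriv f e) /
        ((A ^ 3 - B ^ 3) ^ ((2 : ℝ) / 3)) > iteratedDeriv 2 f e := by
  obtain ⟨m, hm, hT⟩ := exists_eventually_quartic_taylor_le hf h2 h4
  set H2 := iteratedDeriv 2 f e
  set H3 := iteratedDeriv 3 f e
  set T : ℝ → ℝ := fun h ↦ deriv f e * h + H2 * h ^ 2 / 2 + H3 * h ^ 3 / 6 + m * h ^ 4 / 24
  replace hT : ∀ᶠ x in 𝓝 e, f e + T (x - e) ≤ f x :=
    hT.mono fun x hx ↦ by simp only [T]; linarith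
  set β := H3 / (-2 * H2)
  have hβ : 0 ≤ β := div_nonneg h3 (by linarith)
  have hκ : 0 < H2 * β ^ 2 + H3 * β + m / 12 := quadratic_pos_at_vertex h2 (by linarith)
  set P : ℝ → ℝ := fun A ↦ (H2 * β ^ 2 + H3 * β + m / 12) +
    A * (H2 * β ^ 3 + A * (H3 * β ^ 3 / 3 + m * β ^ 2 / 2 + A ^ 2 * (m * β ^ 4 / 12)))
  have hP : ∀ᶠ A in 𝓝[>] 0, 0 < P A := by
    have : Tendsto P (𝓝 0) (𝓝 (H2 * β ^ 2 + H3 * β + m / 12)) := by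
      simpa [P] using (by fun_prop : Continuous P).tendsto 0
    exact nhdsWithin_le_nhds (this.eventually (eventually_gt_nhds hκ))
  have hβA : ∀ᶠ A in 𝓝[>] 0, β * A < 1 :=
    nhdsWithin_le_nhds <| (continuous_const_mul β).tendsto' 0 0 (mul_zero β) |>.eventually
      (eventually_lt_nhds one_pos)
  have hright : Tendsto (fun A : ℝ ↦ e + A + β * A ^ 2) (𝓝[>] 0) (𝓝 e) :=
    tendsto_nhdsWithin_of_tendsto_nhds <| by
      simpa using (by fun_prop : Continuous fun A : ℝ ↦ e + A + β * A ^ 2).tendsto 0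
  have hleft : Tendsto (fun A : ℝ ↦ e - A + β * A ^ 2) (𝓝[>] 0) (𝓝 e) :=
    tendsto_nhdsWithin_of_tendsto_nhds <| by
      simpa using (by fun_prop : Continuous fun A : ℝ ↦ e - A + β * A ^ 2).tendsto 0
  obtain ⟨A, ⟨hA, hPA⟩, hβA, ⟨hTr, hsr⟩, hTl, hsl⟩ :=
    ((eventually_mem_nhdsWithin.and hP).and (hβA.and ((hright.eventually (hT.and hs)).and
      (hleft.eventually (hT.and hs))))).exists
  rw [Set.mem_Ioi] at hA
  rw [show e + A + β * A ^ 2 - e = A + β * A ^ 2 by ring] at hTr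
  rw [show e - A + β * A ^ 2 - e = β * A ^ 2 - A by ring] at hTl
  have hcube : (β * A ^ 2) ^ 3 < A ^ 3 :=
    pow_lt_pow_left₀ (by nlinarith) (by positivity) three_ne_zero
  have hexpand : T (A + β * A ^ 2) + T (β * A ^ 2 - A) - 2 * (β * A ^ 2) * deriv f e =
      H2 * (A ^ 2 - β ^ 3 * A ^ 5) + A ^ 4 * P A := by
    simp only [T, P]; ring
  refine ⟨A, β * A ^ 2, hA, hcube, hsl, hsr, ?_⟩
  rw [gt_iff_lt, lt_div_iff₀ (Real.rpow_pos_of_pos (sub_pos.2 hcube) _)]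
  calc H2 * (A ^ 3 - (β * A ^ 2) ^ 3) ^ ((2 : ℝ) / 3) ≤ H2 * (A ^ 2 - β ^ 3 * A ^ 5) :=
        mul_le_mul_of_nonpos_left (sq_sub_le_rpow_cube_sub_cube hA hβ hβA.le) h2.le
    _ < H2 * (A ^ 2 - β ^ 3 * A ^ 5) + A ^ 4 * P A := lt_add_of_pos_right _ (by positivity)
    _ ≤ _ := by linarith

theorem binEntropy_eq_real_binEntropy : binEntropy = Real.binEntropy := by
  ext u
  simp only [binEntropy, Real.binEntropy, Real.log_inv]
  ring

theorem contDiffAt_binEntropy {n : WithTop ℕ∞} {u : ℝ} (h0 : u ≠ 0) (h1 : u ≠ 1) :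
    ContDiffAt ℝ n binEntropy u := by
  have h1' : 1 - u ≠ 0 := sub_ne_zero.2 h1.symm
  unfold binEntropy
  fun_prop (disch := assumption)

theorem iteratedDeriv_two_binEntropy :
    iteratedDeriv 2 binEntropy = fun u ↦ -1 / (u * (1 - u)) := by
  ext u
  rw [iteratedDeriv_eq_iterate, binEntropy_eq_real_binEntropy, Real.deriv2_binEntropy]

theorem hasDerivAt_mul_one_sub (u : ℝ) : HasDerivAt (fun x ↦ x * (1 - x)) (1 - 2 * u) u :=
  ((hasDerivAt_id' u).mul ((hasDerivAt_id' u).const_sub 1)).congr_deriv (by ring)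

theorem hasDerivAt_neg_one_div_mul_one_sub {u : ℝ} (h0 : u ≠ 0) (h1 : u ≠ 1) :
    HasDerivAt (fun x ↦ -1 / (x * (1 - x))) ((1 - 2 * u) / (u * (1 - u)) ^ 2) u := by
  have hw : u * (1 - u) ≠ 0 := mul_ne_zero h0 (sub_ne_zero.2 h1.symm)
  exact ((hasDerivAt_const u (-1 : ℝ)).div (hasDerivAt_mul_one_sub u) hw).congr_deriv (by ring)

theorem hasDerivAt_one_sub_two_mul_div {u : ℝ} (h0 : u ≠ 0) (h1 : u ≠ 1) :
    HasDerivAt (fun x ↦ (1 - 2 * x) / (x * (1 - x)) ^ 2)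
      ((6 * (u * (1 - u)) - 2) / (u * (1 - u)) ^ 3) u := by
  have hw : u * (1 - u) ≠ 0 := mul_ne_zero h0 (sub_ne_zero.2 h1.symm)
  refine ((((hasDerivAt_id' u).const_mul 2).const_sub 1).div
    ((hasDerivAt_mul_one_sub u).fun_pow 2) (pow_ne_zero 2 hw)).congr_deriv ?_
  field_simp
  ring

theorem iteratedDeriv_three_binEntropy {u : ℝ} (h0 : u ≠ 0) (h1 : u ≠ 1) :
    iteratedDeriv 3 binEntropy u = (1 - 2 * u) / (u * (1 - u)) ^ 2 := by
  rw [iteratedDeriv_succ, iteratedDeriv_two_binEntropy]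
  exact (hasDerivAt_neg_one_div_mul_one_sub h0 h1).deriv

theorem iteratedDeriv_four_binEntropy {u : ℝ} (h0 : u ≠ 0) (h1 : u ≠ 1) :
    iteratedDeriv 4 binEntropy u = (6 * (u * (1 - u)) - 2) / (u * (1 - u)) ^ 3 := by
  have h3 : iteratedDeriv 3 binEntropy =ᶠ[𝓝 u] fun x ↦ (1 - 2 * x) / (x * (1 - x)) ^ 2 := by
    filter_upwards [eventually_ne_nhds h0, eventually_ne_nhds h1] with x hx0 hx1
    exact iteratedDeriv_three_binEntropy hx0 hx1
  rw [iteratedDeriv_succ, h3.deriv_eq]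
  exact (hasDerivAt_one_sub_two_mul_div h0 h1).deriv

theorem iteratedDeriv_two_mul_four_lt_three_mul_sq_binEntropy {u : ℝ} (h0 : 0 < u) (h1 : u < 1)
    (h : 6 * (u * (1 - u)) < 1) :
    iteratedDeriv 2 binEntropy u * iteratedDeriv 4 binEntropy u <
      3 * iteratedDeriv 3 binEntropy u ^ 2 := by
  have hw : 0 < u * (1 - u) := mul_pos h0 (sub_pos.2 h1)
  rw [iteratedDeriv_two_binEntropy, iteratedDeriv_three_binEntropy h0.ne' h1.ne,
    iteratedDeriv_four_binEntropy h0.ne' h1.ne]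
  have hlhs : -1 / (u * (1 - u)) * ((6 * (u * (1 - u)) - 2) / (u * (1 - u)) ^ 3) =
      (2 - 6 * (u * (1 - u))) / (u * (1 - u)) ^ 4 := by
    field_simp; ring
  have hrhs : 3 * ((1 - 2 * u) / (u * (1 - u)) ^ 2) ^ 2 =
      (3 - 12 * (u * (1 - u))) / (u * (1 - u)) ^ 4 := by
    field_simp; ring
  rw [hlhs, hrhs]
  exact div_lt_div_of_pos_right (by linarith) (by positivity)

theorem stmt_17 (e : ℝ) (he : e ∈ Set.Ioo (0 : ℝ) ((3 - Real.sqrt 3) / 6)) :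
    ∃ A B : ℝ, 0 < A ∧ B ^ 3 < A ^ 3 ∧ 0 < e - A + B ∧ e + A + B < 1 ∧
      (binEntropy (e + A + B) + binEntropy (e - A + B) - 2 * binEntropy e
          - 2 * B * deriv binEntropy e) / ((A ^ 3 - B ^ 3) ^ ((2 : ℝ) / 3)) >
        iteratedDeriv 2 binEntropy e := by
  obtain ⟨he0, he⟩ := he
  have hsqrt : Real.sqrt 3 ^ 2 = 3 := Real.sq_sqrt (by norm_num)
  have he1 : e < 1 / 2 := by linarith [Real.sqrt_nonneg 3]
  have hw : 0 < e * (1 - e) := mul_pos he0 (by linarith)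
  have h6 : 6 * (e * (1 - e)) < 1 := by
    nlinarith [mul_pos (sub_pos.2 he) (by linarith [Real.sqrt_nonneg 3] :
      0 < (3 + Real.sqrt 3) / 6 - e)]
  have h2 : iteratedDeriv 2 binEntropy e < 0 := by
    rw [iteratedDeriv_two_binEntropy]
    exact div_neg_of_neg_of_pos (by norm_num) hw
  have h3 : 0 ≤ iteratedDeriv 3 binEntropy e := by
    rw [iteratedDeriv_three_binEntropy he0.ne' (by linarith)]
    exact div_nonneg (by linarith) (sq_nonneg _)
  obtain ⟨A, B, hA, hBA, hl, hr, hF⟩ := exists_second_difference_ratio_gt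
    (contDiffAt_binEntropy he0.ne' (by linarith)) (Ioo_mem_nhds he0 (by linarith : e < 1)) h2 h3
    (iteratedDeriv_two_mul_four_lt_three_mul_sq_binEntropy he0 (by linarith) h6)
  exact ⟨A, B, hA, hBA, hl.1, hr.2, hF⟩
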